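/- (Strong duality.) Let λ ≥ 0, let A be a real m×n matrix, let x̂ ∈ ℝⁿ, set b = Ax̂, and suppose f(x̂) ≤ f(x) for every x with Ax = b (x̂ solves the regularized Basis Pursuit problem). Then the infimum of the dual function satisfies ⨅_{y ∈ ℝᵐ} (½‖S_λ(Aᵀy)‖² − ⟨y, b⟩) = −f(x̂). (The infimum is finite since ½‖S_λ(Aᵀy)‖² − ⟨y, b⟩ ≥ −f(x̂) for all y.) -/

import Mathlib

open scoped RealInnerProductSpace BigOperators
open Matrix

noncomputable def fobj {n : ℕ} (lam : ℝ) (x : EuclideanSpace ℝ (Fin n)) : ℝ :=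
  lam * (∑ i, |x i|) + (1 / 2) * ‖x‖ ^ 2

noncomputable def softShrink {n : ℕ} (lam : ℝ) (x : EuclideanSpace ℝ (Fin n)) :
    EuclideanSpace ℝ (Fin n) :=
  WithLp.toLp 2 (fun i => Real.sign (x i) * max (|x i| - lam) 0)

noncomputable def mulVecE {m n : ℕ} (A : Matrix (Fin m) (Fin n) ℝ)
    (x : EuclideanSpace ℝ (Fin n)) : EuclideanSpace ℝ (Fin m) :=
  Matrix.toEuclideanLin A x


noncomputable def sl (lam t : ℝ) : ℝ := Real.sign t * max (|t| - lam) 0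

lemma sl_eq (lam : ℝ) (hlam : 0 ≤ lam) (t : ℝ) :
    sl lam t = t - max (min t lam) (-lam) := by
  unfold sl
  rcases lt_trichotomy t 0 with h | h | h
  · rw [Real.sign_of_neg h, abs_of_neg h]
    simp only [max_def, min_def]; split_ifs <;> linarith
  · subst h
    simp only [Real.sign_zero, abs_zero, zero_mul, max_def, min_def]
    split_ifs <;> linarith
  · rw [Real.sign_of_pos h, abs_of_pos h]
    simp only [max_def, min_def]; split_ifs <;> linarith

lemma sl_lipschitz (lam : ℝ) (hlam : 0 ≤ lam) (s t : ℝ) :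
    |sl lam s - sl lam t| ≤ |s - t| := by
  have h1 : s - t ≤ |s - t| := le_abs_self _
  have h2 : t - s ≤ |s - t| := by rw [abs_sub_comm]; exact le_abs_self _
  rw [sl_eq lam hlam, sl_eq lam hlam, abs_sub_le_iff]
  constructor <;> (simp only [max_def, min_def]; split_ifs <;> linarith)

lemma fy (lam : ℝ) (hlam : 0 ≤ lam) (z x : ℝ) :
    z * x ≤ 1/2 * (max (|z| - lam) 0)^2 + lam * |x| + 1/2 * x^2 := by
  have h1 : |z| ≤ max (|z| - lam) 0 + lam := by
    rcases le_total (|z| - lam) 0 with h | h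
    · rw [max_eq_right h]; linarith
    · rw [max_eq_left h]; linarith
  have h2 : z * x ≤ |z| * |x| := by
    calc z * x ≤ |z * x| := le_abs_self _
    _ = |z| * |x| := abs_mul z x
  have h3 : (0:ℝ) ≤ max (|z| - lam) 0 := le_max_right _ _
  nlinarith [sq_nonneg (max (|z| - lam) 0 - |x|), abs_nonneg x, sq_abs x]

lemma subgrad (lam : ℝ) (hlam : 0 ≤ lam) (s t : ℝ) :
    sl lam t * (s - t) ≤ 1/2 * (max (|s| - lam) 0)^2 - 1/2 * (max (|t| - lam) 0)^2 := by
  set ms := max (|s| - lam) 0 with hms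
  set mt := max (|t| - lam) 0 with hmt
  have hms0 : 0 ≤ ms := le_max_right _ _
  have hmt0 : 0 ≤ mt := le_max_right _ _
  have hms1 : |s| - lam ≤ ms := le_max_left _ _
  have hmt1 : mt * (mt - (|t| - lam)) = 0 := by
    rcases le_total (|t| - lam) 0 with h | h
    · rw [hmt, max_eq_right h]; ring
    · rw [hmt, max_eq_left h]; ring
  have hsgn : Real.sign t * t = |t| := by
    rcases lt_trichotomy t 0 with h | h | h
    · rw [Real.sign_of_neg h, abs_of_neg h]; ring
    · simp [h]
    · rw [Real.sign_of_pos h, abs_of_pos h]; ring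
  have hsgn2 : Real.sign t * s ≤ |s| := by
    rcases lt_trichotomy t 0 with h | h | h
    · rw [Real.sign_of_neg h]; simpa using neg_le_abs s
    · simp [h, abs_nonneg]
    · rw [Real.sign_of_pos h]; simpa using le_abs_self s
  unfold sl
  have key : Real.sign t * mt * s - mt * |t| ≤ mt * ms - mt^2 := by
    have h5 : Real.sign t * mt * s ≤ mt * |s| := by nlinarith
    have h6 : mt * |s| ≤ mt * (ms + lam) := by nlinarith
    nlinarith
  nlinarith [sq_nonneg (ms - mt)]

lemma hasDerivAt_phi (lam : ℝ) (hlam : 0 ≤ lam) (t : ℝ) :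
    HasDerivAt (fun u => 1/2 * (max (|u| - lam) 0)^2) (sl lam t) t := by
  have key : ∀ s, |1/2 * (max (|s| - lam) 0)^2 - 1/2 * (max (|t| - lam) 0)^2
      - sl lam t * (s - t)| ≤ (s - t)^2 := by
    intro s
    have low := subgrad lam hlam s t
    have up1 := subgrad lam hlam t s
    have lip := sl_lipschitz lam hlam s t
    have h2 : 1/2 * (max (|s| - lam) 0)^2 - 1/2 * (max (|t| - lam) 0)^2
        ≤ sl lam s * (s - t) := by nlinarith
    have h3 : sl lam s * (s - t) - sl lam t * (s - t) ≤ (s - t)^2 := by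
      calc sl lam s * (s - t) - sl lam t * (s - t)
          = (sl lam s - sl lam t) * (s - t) := by ring
        _ ≤ |(sl lam s - sl lam t) * (s - t)| := le_abs_self _
        _ = |sl lam s - sl lam t| * |s - t| := abs_mul _ _
        _ ≤ |s - t| * |s - t| := by
            apply mul_le_mul_of_nonneg_right lip (abs_nonneg _)
        _ = (s - t)^2 := by rw [← sq, sq_abs]
    rw [abs_le]
    constructor <;> nlinarith
  rw [hasDerivAt_iff_isLittleO, Asymptotics.isLittleO_iff]
  intro ε hε
  have hball : Metric.ball t ε ∈ nhds t := Metric.ball_mem_nhds t hε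
  filter_upwards [hball] with s hs
  have hdist : |s - t| < ε := by simpa [Real.dist_eq] using hs
  have := key s
  simp only [Real.norm_eq_abs, smul_eq_mul]
  calc |1/2 * (max (|s| - lam) 0)^2 - 1/2 * (max (|t| - lam) 0)^2 - (s - t) * sl lam t|
      = |1/2 * (max (|s| - lam) 0)^2 - 1/2 * (max (|t| - lam) 0)^2 - sl lam t * (s - t)| := by
        ring_nf
    _ ≤ (s - t)^2 := key s
    _ = |s - t| * |s - t| := by rw [← sq, sq_abs]
    _ ≤ ε * |s - t| := mul_le_mul_of_nonneg_right (le_of_lt hdist) (abs_nonneg _)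

lemma abs_sl (lam : ℝ) (hlam : 0 ≤ lam) (t : ℝ) : |sl lam t| = max (|t| - lam) 0 := by
  unfold sl
  rcases lt_trichotomy t 0 with h | h | h
  · rw [Real.sign_of_neg h, abs_mul]
    simp [le_max_right]
  · subst h; simp [max_eq_right (by linarith : -lam ≤ (0:ℝ))]
  · rw [Real.sign_of_pos h, abs_mul]
    simp [le_max_right]

lemma sl_sq (lam : ℝ) (hlam : 0 ≤ lam) (t : ℝ) :
    (sl lam t)^2 = (max (|t| - lam) 0)^2 := by
  rw [← sq_abs, abs_sl lam hlam]

lemma sl_mul (lam : ℝ) (hlam : 0 ≤ lam) (t : ℝ) :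
    t * sl lam t = (max (|t| - lam) 0)^2 + lam * |sl lam t| := by
  set mt := max (|t| - lam) 0 with hmt
  have hmt1 : mt * (mt - (|t| - lam)) = 0 := by
    rcases le_total (|t| - lam) 0 with h | h
    · rw [hmt, max_eq_right h]; ring
    · rw [hmt, max_eq_left h]; ring
  have hsgn : Real.sign t * t = |t| := by
    rcases lt_trichotomy t 0 with h | h | h
    · rw [Real.sign_of_neg h, abs_of_neg h]; ring
    · simp [h]
    · rw [Real.sign_of_pos h, abs_of_pos h]; ring
  rw [abs_sl lam hlam]
  unfold sl
  have : t * (Real.sign t * mt) = |t| * mt := by rw [← hsgn]; ring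
  rw [this]
  linear_combination -hmt1

lemma clamp_abs_le (lam : ℝ) (hlam : 0 ≤ lam) (t : ℝ) :
    |t - sl lam t| ≤ lam := by
  rw [sl_eq lam hlam]
  rw [abs_le]
  constructor <;> (simp only [max_def, min_def]; split_ifs <;> linarith)

lemma sl_continuous (lam : ℝ) (hlam : 0 ≤ lam) : Continuous (sl lam) := by
  have : sl lam = fun t => t - max (min t lam) (-lam) := funext (sl_eq lam hlam)
  rw [this]
  exact continuous_id.sub ((continuous_id.min continuous_const).max continuous_const)

-- Euclidean helpers
lemma inner_eq {n : ℕ} (x y : EuclideanSpace ℝ (Fin n)) : ⟪x, y⟫ = ∑ i, x i * y i := by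
  simp [PiLp.inner_apply, RCLike.inner_apply, conj_trivial]
  exact Finset.sum_congr rfl fun i _ => mul_comm _ _

lemma norm_sq_eq {n : ℕ} (x : EuclideanSpace ℝ (Fin n)) : ‖x‖^2 = ∑ i, (x i)^2 := by
  rw [← real_inner_self_eq_norm_sq, inner_eq]
  exact Finset.sum_congr rfl fun i _ => (sq (x i)).symm


lemma softShrink_apply {n : ℕ} (lam : ℝ) (z : EuclideanSpace ℝ (Fin n)) (i : Fin n) :
    softShrink lam z i = sl lam (z i) := rfl

lemma mulVecE_apply {m n : ℕ} (A : Matrix (Fin m) (Fin n) ℝ)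
    (x : EuclideanSpace ℝ (Fin n)) (i : Fin m) :
    mulVecE A x i = ∑ j, A i j * x j := by
  simp [mulVecE, Matrix.toEuclideanLin_apply, Matrix.mulVec, dotProduct]

lemma mulVecE_adjoint {m n : ℕ} (A : Matrix (Fin m) (Fin n) ℝ)
    (x : EuclideanSpace ℝ (Fin n)) (y : EuclideanSpace ℝ (Fin m)) :
    ⟪mulVecE A x, y⟫ = ⟪x, mulVecE Aᵀ y⟫ := by
  rw [inner_eq, inner_eq]
  simp only [mulVecE_apply, Matrix.transpose_apply, Finset.sum_mul, Finset.mul_sum]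
  rw [Finset.sum_comm]
  exact Finset.sum_congr rfl fun j _ => Finset.sum_congr rfl fun i _ => by ring

lemma mulVecE_add_smul {m n : ℕ} (A : Matrix (Fin m) (Fin n) ℝ)
    (y v : EuclideanSpace ℝ (Fin m)) (t : ℝ) (j : Fin n) :
    mulVecE Aᵀ (y + t • v) j = mulVecE Aᵀ y j + t * mulVecE Aᵀ v j := by
  have : mulVecE Aᵀ (y + t • v) = mulVecE Aᵀ y + t • mulVecE Aᵀ v := by
    unfold mulVecE; rw [map_add, _root_.map_smul]
  rw [this]; rfl

lemma norm_softShrink_sq {n : ℕ} (lam : ℝ) (hlam : 0 ≤ lam) (z : EuclideanSpace ℝ (Fin n)) :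
    ‖softShrink lam z‖^2 = ∑ i, (max (|z i| - lam) 0)^2 := by
  rw [norm_sq_eq]
  exact Finset.sum_congr rfl fun i _ => by rw [softShrink_apply, sl_sq lam hlam]


/-- Strong duality: if `x̂` solves the regularized Basis Pursuit problem with `b = Ax̂`,
then `⨅_y (½‖S_λ(Aᵀy)‖² − ⟨y,b⟩) = −f(x̂)`. -/
theorem strong_duality {m n : ℕ} (lam : ℝ) (hlam : 0 ≤ lam)
    (A : Matrix (Fin m) (Fin n) ℝ) (xhat : EuclideanSpace ℝ (Fin n))
    (b : EuclideanSpace ℝ (Fin m)) (hb : b = mulVecE A xhat)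
    (hopt : ∀ x : EuclideanSpace ℝ (Fin n), mulVecE A x = b → fobj lam xhat ≤ fobj lam x) :
    ⨅ y : EuclideanSpace ℝ (Fin m),
        ((1 / 2) * ‖softShrink lam (mulVecE Aᵀ y)‖ ^ 2 - ⟪y, b⟫) = -fobj lam xhat := by
  have hyb : ∀ y' : EuclideanSpace ℝ (Fin m), ⟪y', b⟫ = ⟪mulVecE Aᵀ y', xhat⟫ := by
    intro y'
    calc ⟪y', b⟫ = ⟪mulVecE A xhat, y'⟫ := by rw [hb, real_inner_comm]
      _ = ⟪xhat, mulVecE Aᵀ y'⟫ := mulVecE_adjoint A xhat y'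
      _ = ⟪mulVecE Aᵀ y', xhat⟫ := real_inner_comm _ _
  -- weak duality
  have weak : ∀ y : EuclideanSpace ℝ (Fin m),
      -fobj lam xhat ≤ (1 / 2) * ‖softShrink lam (mulVecE Aᵀ y)‖ ^ 2 - ⟪y, b⟫ := by
    intro y
    rw [hyb y, norm_softShrink_sq lam hlam, inner_eq]
    have hsum : ∑ i, mulVecE Aᵀ y i * xhat i ≤
        (∑ i, 1/2 * (max (|mulVecE Aᵀ y i| - lam) 0)^2) + ((∑ i, lam * |xhat i|)
          + ∑ i, 1/2 * (xhat i)^2) := by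
      rw [← Finset.sum_add_distrib, ← Finset.sum_add_distrib]
      exact Finset.sum_le_sum fun i _ => by
        have := fy lam hlam (mulVecE Aᵀ y i) (xhat i)
        linarith
    unfold fobj
    rw [norm_sq_eq]
    rw [← Finset.mul_sum, ← Finset.mul_sum, ← Finset.mul_sum] at hsum
    linarith
  have hbdd : BddBelow (Set.range fun y : EuclideanSpace ℝ (Fin m) =>
      (1 / 2) * ‖softShrink lam (mulVecE Aᵀ y)‖ ^ 2 - ⟪y, b⟫) := by
    refine ⟨-fobj lam xhat, ?_⟩
    rintro _ ⟨y, rfl⟩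
    exact weak y
  -- the reduced dual function on z-space
  set D : EuclideanSpace ℝ (Fin n) → ℝ :=
    fun z => (1 / 2) * ‖softShrink lam z‖ ^ 2 - ⟪z, xhat⟫ with hDdef
  have hd_eq : ∀ y : EuclideanSpace ℝ (Fin m),
      (1 / 2) * ‖softShrink lam (mulVecE Aᵀ y)‖ ^ 2 - ⟪y, b⟫ = D (mulVecE Aᵀ y) := by
    intro y; rw [hDdef, hyb y]
  -- continuity
  have hcont : Continuous D := by
    have h1 : Continuous fun z : EuclideanSpace ℝ (Fin n) => ‖softShrink lam z‖ ^ 2 := by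
      have he : (fun z : EuclideanSpace ℝ (Fin n) => ‖softShrink lam z‖ ^ 2)
          = fun z => ∑ i, (max (|z i| - lam) 0) ^ 2 := funext (norm_softShrink_sq lam hlam)
      rw [he]
      exact continuous_finset_sum _ fun i _ =>
        (((EuclideanSpace.proj i).continuous.abs.sub continuous_const).max
          continuous_const).pow 2
    have h2 : Continuous fun z : EuclideanSpace ℝ (Fin n) => ⟪z, xhat⟫ := by
      have he : (fun z : EuclideanSpace ℝ (Fin n) => ⟪z, xhat⟫)
          = fun z => ∑ i, z i * xhat i := funext fun z => inner_eq z xhat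
      rw [he]
      exact continuous_finset_sum _ fun i _ =>
        (EuclideanSpace.proj i).continuous.mul continuous_const
    exact (continuous_const.mul h1).sub h2
  set C := lam * Real.sqrt n with hC
  set K := ‖xhat‖ with hK
  have hC0 : 0 ≤ C := mul_nonneg hlam (Real.sqrt_nonneg _)
  have hK0 : 0 ≤ K := norm_nonneg _
  -- coercivity
  have hcoer : ∀ z : EuclideanSpace ℝ (Fin n), 1/2 * ‖z‖^2 - (C + K) * ‖z‖ ≤ D z := by
    intro z
    have h1 : ‖z‖ - C ≤ ‖softShrink lam z‖ := by
      have h2 : ‖z - softShrink lam z‖ ^ 2 ≤ C ^ 2 := by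
        rw [norm_sq_eq]
        have hterm : ∀ i, ((z - softShrink lam z) i) ^ 2 ≤ lam ^ 2 := by
          intro i
          have hco : (z - softShrink lam z) i = z i - sl lam (z i) := by rw [PiLp.sub_apply, softShrink_apply]
          have h3 : |(z - softShrink lam z) i| ≤ lam := by
            rw [hco]; exact clamp_abs_le lam hlam (z i)
          calc ((z - softShrink lam z) i) ^ 2 = |(z - softShrink lam z) i| ^ 2 :=
                (sq_abs _).symm
            _ ≤ lam ^ 2 := pow_le_pow_left₀ (abs_nonneg _) h3 2
        calc ∑ i, ((z - softShrink lam z) i) ^ 2 ≤ ∑ _i : Fin n, lam ^ 2 :=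
              Finset.sum_le_sum fun i _ => hterm i
          _ = n * lam ^ 2 := by simp [Finset.sum_const, mul_comm]
          _ = C ^ 2 := by
              rw [hC, mul_pow, Real.sq_sqrt (Nat.cast_nonneg n)]; ring
      have h4 : ‖z - softShrink lam z‖ ≤ C := by
        have := Real.sqrt_le_sqrt h2
        rwa [Real.sqrt_sq (norm_nonneg _), Real.sqrt_sq hC0] at this
      have h5 : ‖z‖ - ‖softShrink lam z‖ ≤ ‖z - softShrink lam z‖ := norm_sub_norm_le _ _
      linarith
    have h6 : ⟪z, xhat⟫ ≤ ‖z‖ * K := real_inner_le_norm z xhat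
    have h7 : (0:ℝ) ≤ ‖softShrink lam z‖ := norm_nonneg _
    have h8 : (0:ℝ) ≤ ‖z‖ := norm_nonneg _
    rw [hDdef]
    rcases le_total ‖z‖ C with h | h
    · nlinarith [sq_nonneg (‖softShrink lam z‖)]
    · nlinarith [sq_nonneg (‖softShrink lam z‖ - (‖z‖ - C))]
  -- existence of a minimizer over the range of Aᵀ
  set p := LinearMap.range (Matrix.toEuclideanLin Aᵀ) with hp
  have hcont' : Continuous fun z : ↥p => D z := hcont.comp continuous_subtype_val
  have hq : Filter.Tendsto (fun r : ℝ => 1/2 * r^2 - (C + K) * r)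
      Filter.atTop Filter.atTop := by
    refine Filter.tendsto_atTop_mono' Filter.atTop ?_ Filter.tendsto_id
    filter_upwards [Filter.eventually_ge_atTop (2*(C+K)+2)] with r hr
    have hCK : (0:ℝ) ≤ C + K := add_nonneg hC0 hK0
    simp only [id_eq]
    nlinarith
  have htend : Filter.Tendsto (fun z : ↥p => D z) (Filter.cocompact _) Filter.atTop := by
    have h8 : Filter.Tendsto (fun z : ↥p => 1/2 * ‖z‖^2 - (C + K) * ‖z‖)
        (Filter.cocompact _) Filter.atTop := hq.comp tendsto_norm_cocompact_atTop
    exact Filter.tendsto_atTop_mono (fun z => hcoer (z : EuclideanSpace ℝ (Fin n))) h8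
  obtain ⟨z₀, hz₀⟩ := hcont'.exists_forall_le htend
  obtain ⟨ystar, hystar⟩ := z₀.2
  have hzeq : mulVecE Aᵀ ystar = (z₀ : EuclideanSpace ℝ (Fin n)) := hystar
  have hmin : ∀ y : EuclideanSpace ℝ (Fin m), D (mulVecE Aᵀ ystar) ≤ D (mulVecE Aᵀ y) := by
    intro y
    rw [hzeq]
    exact hz₀ ⟨mulVecE Aᵀ y, ⟨y, rfl⟩⟩
  set z := mulVecE Aᵀ ystar with hz
  set xstar := softShrink lam z with hxstar
  -- optimality: A xstar = b
  have hgrad : ∀ v : EuclideanSpace ℝ (Fin m), ⟪mulVecE A xstar - b, v⟫ = 0 := by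
    intro v
    set w := mulVecE Aᵀ v with hw
    set ψ : ℝ → ℝ := fun t =>
      (∑ i, 1/2 * (max (|z i + t * w i| - lam) 0)^2) - (⟪ystar, b⟫ + t * ⟪v, b⟫) with hψ
    have hψd : HasDerivAt ψ ((∑ i, sl lam (z i) * w i) - ⟪v, b⟫) 0 := by
      apply HasDerivAt.sub
      · apply HasDerivAt.fun_sum
        intro i _
        have hin : HasDerivAt (fun t : ℝ => z i + t * w i) (w i) 0 := by
          simpa using ((hasDerivAt_id (0:ℝ)).mul_const (w i)).const_add (z i)
        have hout := hasDerivAt_phi lam hlam (z i + 0 * w i)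
        have hcomp := HasDerivAt.comp 0 hout hin
        have h0 : z i + 0 * w i = z i := by ring
        rw [h0] at hcomp
        simpa [Function.comp_def] using hcomp
      · simpa using ((hasDerivAt_id (0:ℝ)).mul_const ⟪v, b⟫).const_add ⟪ystar, b⟫
    have he : ∀ s : ℝ, ψ s = D (mulVecE Aᵀ (ystar + s • v)) := by
      intro s
      simp only [hψ, hDdef]
      have h1 : ‖softShrink lam (mulVecE Aᵀ (ystar + s • v))‖^2
          = ∑ i, (max (|z i + s * w i| - lam) 0)^2 := by
        rw [norm_softShrink_sq lam hlam]
        exact Finset.sum_congr rfl fun i _ => by rw [mulVecE_add_smul]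
      have h2 : ⟪mulVecE Aᵀ (ystar + s • v), xhat⟫ = ⟪ystar, b⟫ + s * ⟪v, b⟫ := by
        rw [← hyb (ystar + s • v), inner_add_left, real_inner_smul_left]
      rw [h1, h2, Finset.mul_sum]
    have hψmin : ∀ t, ψ 0 ≤ ψ t := by
      intro t
      rw [he 0, he t]
      have h0 : ystar + (0:ℝ) • v = ystar := by simp
      rw [h0]
      exact hmin (ystar + t • v)
    have hloc : IsLocalMin ψ 0 := Filter.Eventually.of_forall fun t => hψmin t
    have hzero := hloc.hasDerivAt_eq_zero hψd
    have hsum : ∑ i, sl lam (z i) * w i = ⟪v, b⟫ := by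
      have := sub_eq_zero.mp hzero
      linarith [this]
    have hAxv : ⟪mulVecE A xstar, v⟫ = ⟪v, b⟫ := by
      rw [mulVecE_adjoint A xstar v, inner_eq]
      rw [← hsum]
      exact Finset.sum_congr rfl fun i _ => by rw [hxstar, softShrink_apply]
    rw [inner_sub_left, hAxv, real_inner_comm]
    ring
  have hAx : mulVecE A xstar = b := by
    have h9 := hgrad (mulVecE A xstar - b)
    rwa [inner_self_eq_zero, sub_eq_zero] at h9
  -- value of the dual at ystar
  have hval : D z = -fobj lam xstar := by
    have hzx : ⟪z, xhat⟫ = ⟪z, xstar⟫ := by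
      calc ⟪z, xhat⟫ = ⟪ystar, b⟫ := (hyb ystar).symm
        _ = ⟪ystar, mulVecE A xstar⟫ := by rw [hAx]
        _ = ⟪mulVecE A xstar, ystar⟫ := real_inner_comm _ _
        _ = ⟪xstar, mulVecE Aᵀ ystar⟫ := mulVecE_adjoint A xstar ystar
        _ = ⟪z, xstar⟫ := real_inner_comm _ _
    rw [hDdef]
    simp only
    rw [hzx, inner_eq, norm_softShrink_sq lam hlam]
    unfold fobj
    rw [norm_sq_eq]
    have hterm : ∀ i, z i * xstar i
        = (max (|z i| - lam) 0)^2 + lam * |xstar i| := by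
      intro i
      rw [hxstar, softShrink_apply]
      exact sl_mul lam hlam (z i)
    have hterm2 : ∀ i, (xstar i)^2 = (max (|z i| - lam) 0)^2 := by
      intro i
      rw [hxstar, softShrink_apply]
      exact sl_sq lam hlam (z i)
    rw [Finset.sum_congr rfl fun i _ => hterm i,
        Finset.sum_congr rfl fun i _ => hterm2 i, Finset.sum_add_distrib,
        ← Finset.mul_sum]
    ring
  -- conclusion
  apply le_antisymm
  · calc ⨅ y : EuclideanSpace ℝ (Fin m),
        ((1 / 2) * ‖softShrink lam (mulVecE Aᵀ y)‖ ^ 2 - ⟪y, b⟫)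
        ≤ (1 / 2) * ‖softShrink lam (mulVecE Aᵀ ystar)‖ ^ 2 - ⟪ystar, b⟫ :=
          ciInf_le hbdd ystar
      _ = D z := hd_eq ystar
      _ = -fobj lam xstar := hval
      _ ≤ -fobj lam xhat := neg_le_neg (hopt xstar hAx)
  · exact le_ciInf weak
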